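/- arXiv:1412.7717 — 3 statements merged into one kernel-verified Lean document; each statement's English description precedes it below -/
import Mathlib

section
/- For d ≥ 3, the Gaussian semigroup leaves the function |x|^{-r} supermedian for 0 ≤ r ≤ d-2: for all t > 0 and x ∈ ℝ^d, ∫_{ℝ^d} g_t(y - x) |y|^{-r} dy ≤ |x|^{-r}, where g_t(x) = (4πt)^{-d/2} e^{-|x|²/(4t)}. -/
/-!
For `z > 0` one has the subordination formula `z^{-r} = Γ(r/2)⁻¹ ∫₀^∞ s^{r/2-1} e^{-s z²} ds`,
and the heat kernel maps the Gaussian `e^{-s|y|²}` to `(1+4ts)^{-d/2} e^{-s|x|²/(1+4ts)}`.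
By Tonelli the left-hand side becomes `Γ(r/2)⁻¹ ∫₀^∞ s^{r/2-1} (1+4ts)^{-d/2} e^{-|x|² u} ds`
with `u = s/(1+4ts)`. Since `du = ds/(1+4ts)²` and `s^{r/2-1} = u^{r/2-1} (1+4ts)^{r/2-1}`, the
integrand is `u^{r/2-1} e^{-|x|² u} (1+4ts)^{r/2+1-d/2} du`, and the last factor is at most `1`
precisely when `r ≤ d - 2`. Dropping it and enlarging the range `u ∈ (0, 1/4t)` to `(0, ∞)` gives
back the subordination integral for `|x|^{-r}`.
-/

open MeasureTheory ENNReal Real Set Module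

lemma lintegral_rpow_mul_exp_neg_mul_Ioi {p c : ℝ} (hp : 0 < p) (hc : 0 < c) :
    ∫⁻ s in Ioi 0, ENNReal.ofReal (s ^ (p - 1) * exp (-(c * s)))
      = ENNReal.ofReal ((1 / c) ^ p * Gamma p) := by
  have hint : IntegrableOn (fun s : ℝ => s ^ (p - 1) * exp (-(c * s))) (Ioi 0) := by
    simpa [Real.rpow_one] using
      integrableOn_rpow_mul_exp_neg_mul_rpow (p := 1) (s := p - 1) (by linarith) one_pos hc
  rw [← ofReal_integral_eq_lintegral_ofReal hint
    ((ae_restrict_iff' measurableSet_Ioi).2 (Filter.Eventually.of_forall fun s (hs : 0 < s) =>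
      by positivity)), integral_rpow_mul_exp_neg_mul_Ioi hp hc]

lemma ofReal_rpow_neg_eq_lintegral {z r : ℝ} (hz : 0 < z) (hr : 0 < r) :
    ENNReal.ofReal z ^ (-r) = ENNReal.ofReal (Gamma (r / 2))⁻¹
      * ∫⁻ s in Ioi 0, ENNReal.ofReal (s ^ (r / 2 - 1))
          * ENNReal.ofReal (exp (-(z ^ 2 * s))) := by
  have hΓ : 0 < Gamma (r / 2) := Gamma_pos_of_pos (by positivity)
  rw [← setLIntegral_congr_fun measurableSet_Ioi fun s (hs : 0 < s) =>
      ENNReal.ofReal_mul (rpow_nonneg hs.le _),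
    lintegral_rpow_mul_exp_neg_mul_Ioi (by positivity) (by positivity),
    ← ENNReal.ofReal_mul (by positivity), ENNReal.ofReal_rpow_of_pos hz, mul_comm _ (Gamma _),
    inv_mul_cancel_left₀ hΓ.ne', one_div, inv_rpow (by positivity), ← rpow_neg (by positivity),
    ← Real.rpow_natCast, ← rpow_mul hz.le]
  congr 2
  push_cast
  ring

lemma lintegral_Ioi_comp_div_one_add_mul_le {a : ℝ} (ha : 0 < a) (g : ℝ → ℝ≥0∞) :
    ∫⁻ s in Ioi 0, ENNReal.ofReal (((1 + a * s) ^ 2)⁻¹) * g (s / (1 + a * s))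
      ≤ ∫⁻ u in Ioi 0, g u := by
  have hderiv : ∀ s ∈ Ioi (0 : ℝ),
      HasDerivWithinAt (fun s => s / (1 + a * s)) (((1 + a * s) ^ 2)⁻¹) (Ioi 0) s := by
    intro s (hs : 0 < s)
    have hK : 0 < 1 + a * s := by positivity
    refine ((hasDerivAt_id s).div (((hasDerivAt_id s).const_mul a).const_add 1)
      hK.ne').hasDerivWithinAt.congr_deriv ?_
    simp only [id]
    field_simp
    ring
  have hinj : InjOn (fun s => s / (1 + a * s)) (Ioi 0) := by
    intro u (hu : 0 < u) v (hv : 0 < v) huv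
    rw [div_eq_div_iff (by positivity) (by positivity)] at huv
    linarith
  calc ∫⁻ s in Ioi 0, ENNReal.ofReal (((1 + a * s) ^ 2)⁻¹) * g (s / (1 + a * s))
      = ∫⁻ u in (fun s => s / (1 + a * s)) '' Ioi 0, g u := by
        rw [lintegral_image_eq_lintegral_abs_deriv_mul measurableSet_Ioi hderiv hinj]
        refine setLIntegral_congr_fun measurableSet_Ioi fun s (hs : 0 < s) => ?_
        rw [abs_of_pos (by positivity)]
    _ ≤ ∫⁻ u in Ioi 0, g u :=
        lintegral_mono_set (image_subset_iff.2 fun s (hs : 0 < s) => by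
          simp only [mem_preimage, mem_Ioi]; positivity)

lemma lintegral_Ioi_rpow_mul_one_add_mul_rpow_le {a p m c : ℝ} (ha : 0 < a) (hpm : p + 1 ≤ m) :
    ∫⁻ s in Ioi 0, ENNReal.ofReal (s ^ (p - 1))
        * ENNReal.ofReal ((1 + a * s) ^ (-m) * exp (-(c * (s / (1 + a * s)))))
      ≤ ∫⁻ u in Ioi 0, ENNReal.ofReal (u ^ (p - 1)) * ENNReal.ofReal (exp (-(c * u))) := by
  refine le_trans (setLIntegral_mono' measurableSet_Ioi fun s (hs : 0 < s) => ?_)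
    (lintegral_Ioi_comp_div_one_add_mul_le ha
      fun u => ENNReal.ofReal (u ^ (p - 1)) * ENNReal.ofReal (exp (-(c * u))))
  have hK : 1 ≤ 1 + a * s := by nlinarith
  have hK0 : 0 < 1 + a * s := by linarith
  rw [← ENNReal.ofReal_mul (by positivity), ← ENNReal.ofReal_mul (by positivity),
    ← ENNReal.ofReal_mul (by positivity)]
  refine ENNReal.ofReal_le_ofReal ?_
  calc s ^ (p - 1) * ((1 + a * s) ^ (-m) * exp (-(c * (s / (1 + a * s)))))
      ≤ s ^ (p - 1) * ((1 + a * s) ^ (-2 + -(p - 1)) * exp (-(c * (s / (1 + a * s))))) := by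
        gcongr
        linarith
    _ = ((1 + a * s) ^ 2)⁻¹
          * ((s / (1 + a * s)) ^ (p - 1) * exp (-(c * (s / (1 + a * s))))) := by
        rw [div_rpow hs.le hK0.le, rpow_add hK0, rpow_neg hK0.le, rpow_neg hK0.le (p - 1),
          Real.rpow_two]
        ring

lemma neg_sq_norm_sub_div_add_neg_mul_eq {V : Type*} [NormedAddCommGroup V]
    [InnerProductSpace ℝ V] {t s : ℝ} (ht : 0 < t) (hs : 0 ≤ s) (x y : V) :
    -‖y - x‖ ^ 2 / (4 * t) + -(‖y‖ ^ 2 * s)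
      = -((1 + 4 * t * s) / (4 * t)) * ‖y - (1 + 4 * t * s)⁻¹ • x‖ ^ 2
        + -(‖x‖ ^ 2 * (s / (1 + 4 * t * s))) := by
  have hK : 0 < 1 + 4 * t * s := by positivity
  rw [norm_sub_sq_real, norm_sub_sq_real, inner_smul_right, norm_smul, Real.norm_eq_abs,
    abs_of_pos (inv_pos.2 hK)]
  field_simp
  ring

section HeatKernel

variable {V : Type*} [NormedAddCommGroup V] [InnerProductSpace ℝ V] [FiniteDimensional ℝ V]
  [MeasurableSpace V] [BorelSpace V]

variable (V) in
noncomputable def heatKernel (t : ℝ) (x : V) : ℝ :=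
  (4 * π * t) ^ (-(finrank ℝ V : ℝ) / 2) * exp (-‖x‖ ^ 2 / (4 * t))

lemma lintegral_ofReal_exp_neg_mul_sq_norm {b : ℝ} (hb : 0 < b) :
    ∫⁻ v : V, ENNReal.ofReal (exp (-b * ‖v‖ ^ 2))
      = ENNReal.ofReal ((π / b) ^ (finrank ℝ V / 2 : ℝ)) := by
  have hint := GaussianFourier.integral_rexp_neg_mul_sq_norm (V := V) hb
  rw [← hint, ofReal_integral_eq_lintegral_ofReal
    (Integrable.of_integral_ne_zero (by rw [hint]; positivity))
    (Filter.Eventually.of_forall fun _ => by positivity)]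

lemma lintegral_heatKernel_mul_gaussian {t s : ℝ} (ht : 0 < t) (hs : 0 ≤ s) (x : V) :
    ∫⁻ y, ENNReal.ofReal (heatKernel V t (y - x)) * ENNReal.ofReal (exp (-(‖y‖ ^ 2 * s)))
      = ENNReal.ofReal ((1 + 4 * t * s) ^ (-(finrank ℝ V / 2 : ℝ))
          * exp (-(‖x‖ ^ 2 * (s / (1 + 4 * t * s))))) := by
  have hK : 0 < 1 + 4 * t * s := by positivity
  have hsplit : ∀ y : V,
      ENNReal.ofReal (heatKernel V t (y - x)) * ENNReal.ofReal (exp (-(‖y‖ ^ 2 * s)))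
        = ENNReal.ofReal ((4 * π * t) ^ (-(finrank ℝ V : ℝ) / 2)
            * exp (-(‖x‖ ^ 2 * (s / (1 + 4 * t * s)))))
          * ENNReal.ofReal
              (exp (-((1 + 4 * t * s) / (4 * t)) * ‖y - (1 + 4 * t * s)⁻¹ • x‖ ^ 2)) := by
    intro y
    rw [← ENNReal.ofReal_mul (by unfold heatKernel; positivity),
      ← ENNReal.ofReal_mul (by positivity), heatKernel, mul_assoc, ← exp_add,
      neg_sq_norm_sub_div_add_neg_mul_eq ht hs, exp_add]
    congr 1
    ring
  simp_rw [hsplit]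
  rw [lintegral_const_mul' _ _ ENNReal.ofReal_ne_top,
    lintegral_sub_right_eq_self
      (fun y => ENNReal.ofReal (exp (-((1 + 4 * t * s) / (4 * t)) * ‖y‖ ^ 2))),
    lintegral_ofReal_exp_neg_mul_sq_norm (by positivity), ← ENNReal.ofReal_mul (by positivity)]
  congr 1
  rw [show π / ((1 + 4 * t * s) / (4 * t)) = 4 * π * t / (1 + 4 * t * s) by field_simp,
    div_rpow (by positivity) hK.le, neg_div, rpow_neg (by positivity), rpow_neg hK.le]
  field_simp

lemma lintegral_heatKernel_mul_rpow_neg_norm [Nontrivial V] {r t : ℝ} (hr : 0 < r) (ht : 0 < t)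
    (x : V) :
    ∫⁻ y, ENNReal.ofReal (heatKernel V t (y - x)) * ENNReal.ofReal ‖y‖ ^ (-r)
      = ENNReal.ofReal (Gamma (r / 2))⁻¹ * ∫⁻ s in Ioi 0, ENNReal.ofReal (s ^ (r / 2 - 1))
          * ENNReal.ofReal ((1 + 4 * t * s) ^ (-(finrank ℝ V / 2 : ℝ))
            * exp (-(‖x‖ ^ 2 * (s / (1 + 4 * t * s))))) := by
  have hmeas : Measurable (Function.uncurry fun (y : V) (s : ℝ) =>
      ENNReal.ofReal (s ^ (r / 2 - 1))
        * (ENNReal.ofReal (heatKernel V t (y - x)) * ENNReal.ofReal (exp (-(‖y‖ ^ 2 * s))))) := by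
    unfold heatKernel Function.uncurry
    fun_prop
  calc ∫⁻ y, ENNReal.ofReal (heatKernel V t (y - x)) * ENNReal.ofReal ‖y‖ ^ (-r)
      = ∫⁻ y, ENNReal.ofReal (Gamma (r / 2))⁻¹ * ∫⁻ s in Ioi 0, ENNReal.ofReal (s ^ (r / 2 - 1))
          * (ENNReal.ofReal (heatKernel V t (y - x)) * ENNReal.ofReal (exp (-(‖y‖ ^ 2 * s)))) := by
        refine lintegral_congr_ae ((Measure.ae_ne volume 0).mono fun y hy => ?_)
        dsimp only
        rw [ofReal_rpow_neg_eq_lintegral (norm_pos_iff.2 hy) hr, mul_left_comm,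
          ← lintegral_const_mul' _ _ ENNReal.ofReal_ne_top]
        simp only [mul_left_comm]
    _ = ENNReal.ofReal (Gamma (r / 2))⁻¹ * ∫⁻ s in Ioi 0, ENNReal.ofReal (s ^ (r / 2 - 1))
          * ∫⁻ y, ENNReal.ofReal (heatKernel V t (y - x))
              * ENNReal.ofReal (exp (-(‖y‖ ^ 2 * s))) := by
        rw [lintegral_const_mul' _ _ ENNReal.ofReal_ne_top,
          lintegral_lintegral_swap hmeas.aemeasurable]
        simp only [lintegral_const_mul' _ _ ENNReal.ofReal_ne_top]
    _ = _ := by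
        congr 1
        refine setLIntegral_congr_fun measurableSet_Ioi fun s (hs : 0 < s) => ?_
        rw [lintegral_heatKernel_mul_gaussian ht hs.le]

theorem lintegral_heatKernel_mul_rpow_neg_norm_le {r t : ℝ} (hr0 : 0 ≤ r)
    (hr : r ≤ (finrank ℝ V : ℝ) - 2) (ht : 0 < t) (x : V) :
    ∫⁻ y, ENNReal.ofReal (heatKernel V t (y - x)) * ENNReal.ofReal ‖y‖ ^ (-r)
      ≤ ENNReal.ofReal ‖x‖ ^ (-r) := by
  rcases hr0.eq_or_lt with rfl | hr_pos
  · simpa using (lintegral_heatKernel_mul_gaussian ht le_rfl x).le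
  rcases eq_or_ne x 0 with rfl | hx
  · simp [ENNReal.zero_rpow_of_neg (neg_neg_of_pos hr_pos)]
  have hV : (0 : ℝ) < finrank ℝ V := by linarith
  have : Nontrivial V := nontrivial_of_finrank_pos (R := ℝ) (by exact_mod_cast hV)
  rw [lintegral_heatKernel_mul_rpow_neg_norm hr_pos ht x,
    ofReal_rpow_neg_eq_lintegral (norm_pos_iff.2 hx) hr_pos]
  refine mul_le_mul_right (lintegral_Ioi_rpow_mul_one_add_mul_rpow_le (by positivity) ?_) _
  linarith

end HeatKernel

theorem gaussian_supermedian_power_general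
    (d : ℕ) (r : ℝ) (hr0 : 0 ≤ r) (hr : r ≤ (d:ℝ) - 2)
    (t : ℝ) (ht : 0 < t) (x : EuclideanSpace ℝ (Fin d)) :
    (∫⁻ y, ENNReal.ofReal ((4 * Real.pi * t) ^ (-(d:ℝ)/2) * Real.exp (-‖y - x‖^2 / (4*t)))
        * ENNReal.ofReal ‖y‖ ^ (-r))
      ≤ ENNReal.ofReal ‖x‖ ^ (-r) := by
  simpa [heatKernel] using
    lintegral_heatKernel_mul_rpow_neg_norm_le hr0 (by simpa using hr) ht x

/-- Supermedian property of `|x|^{-r}` for the Gaussian semigroup, `d ≥ 3`, `0 ≤ r ≤ d-2`: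
`∫ g_t(y-x) |y|^{-r} dy ≤ |x|^{-r}` in `[0,∞]`. -/
theorem gaussian_supermedian_power
    (d : ℕ) (hd : 3 ≤ d) (r : ℝ) (hr0 : 0 ≤ r) (hr : r ≤ (d:ℝ) - 2)
    (t : ℝ) (ht : 0 < t) (x : EuclideanSpace ℝ (Fin d)) :
    (∫⁻ y, ENNReal.ofReal ((4 * Real.pi * t) ^ (-(d:ℝ)/2) * Real.exp (-‖y - x‖^2 / (4*t)))
        * ENNReal.ofReal ‖y‖ ^ (-r))
      ≤ ENNReal.ofReal ‖x‖ ^ (-r) :=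
  gaussian_supermedian_power_general d r hr0 hr t ht x
end

section
/- The constant C(β) = 2^α Γ(d/2 - αβ/2) Γ(α(β+1)/2) / (Γ(d/2 - α(β+1)/2) Γ(αβ/2)) appearing in the fractional Hardy inequality, as a function of β ∈ (0, d/α - 1), is maximized at β = (d-α)/(2α), where it equals 2^α Γ((d+α)/4)² / Γ((d-α)/4)². -/
open Real Filter Finset

private lemma gamma_prod_key (a b c : ℝ) (ha : 0 < a) (hb : 0 < b) (hc : 0 < c) :
    Real.Gamma (a+c) * Real.Gamma (b+c) * Real.Gamma ((a+b)/2) ^ 2 ≤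
      Real.Gamma ((a+b)/2 + c) ^ 2 * Real.Gamma a * Real.Gamma b := by
  set m := (a+b)/2 with hm
  have hm0 : 0 < m := by rw [hm]; positivity
  have hseq : ∀ n : ℕ, GammaSeq (a+c) n * GammaSeq (b+c) n * GammaSeq m n ^ 2 ≤
      GammaSeq (m+c) n ^ 2 * GammaSeq a n * GammaSeq b n := by
    intro n
    rcases Nat.eq_zero_or_pos n with rfl | hn
    · simp [GammaSeq, Real.zero_rpow ha.ne', Real.zero_rpow hb.ne', Real.zero_rpow hm0.ne',
        Real.zero_rpow (by positivity : (0:ℝ) < a + c).ne',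
        Real.zero_rpow (by positivity : (0:ℝ) < b + c).ne',
        Real.zero_rpow (by positivity : (0:ℝ) < m + c).ne']
    have hN : (0:ℝ) < n := Nat.cast_pos.mpr hn
    have hP : ∀ s : ℝ, 0 < s → 0 < ∏ j ∈ Finset.range (n+1), (s + (j:ℝ)) := by
      intro s hs
      exact Finset.prod_pos fun j _ => by positivity
    have h2 : ∀ x : ℝ, ((n:ℝ)^x)^2 = (n:ℝ)^(x*2) := by
      intro x
      rw [← Real.rpow_natCast ((n:ℝ)^x) 2, ← Real.rpow_mul hN.le]
      norm_num
    simp only [GammaSeq, div_pow, mul_pow, div_mul_div_comm]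
    rw [div_le_div_iff₀ (by positivity) (by positivity)]
    have hnum : (n:ℝ)^(a+c) * n.factorial * ((n:ℝ)^(b+c) * n.factorial) *
          (((n:ℝ)^m)^2 * (n.factorial:ℝ)^2)
        = ((n:ℝ)^(m+c))^2 * (n.factorial:ℝ)^2 * ((n:ℝ)^a * n.factorial) *
          ((n:ℝ)^b * n.factorial) := by
      rw [h2, h2]
      rw [show (n:ℝ)^(a+c) * ↑n.factorial * ((n:ℝ)^(b+c) * ↑n.factorial) *
            ((n:ℝ)^(m*2) * (↑n.factorial:ℝ)^2)
          = ((n:ℝ)^(a+c) * (n:ℝ)^(b+c) * (n:ℝ)^(m*2)) * (↑n.factorial:ℝ)^4 by ring]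
      rw [show (n:ℝ)^((m+c)*2) * (↑n.factorial:ℝ)^2 * ((n:ℝ)^a * ↑n.factorial) *
            ((n:ℝ)^b * ↑n.factorial)
          = ((n:ℝ)^((m+c)*2) * (n:ℝ)^a * (n:ℝ)^b) * (↑n.factorial:ℝ)^4 by ring]
      congr 1
      rw [← Real.rpow_add hN, ← Real.rpow_add hN, ← Real.rpow_add hN, ← Real.rpow_add hN]
      congr 1
      rw [hm]; ring
    rw [hnum]
    apply mul_le_mul_of_nonneg_left _ (by positivity)
    rw [← Finset.prod_pow, ← Finset.prod_pow, ← Finset.prod_mul_distrib,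
      ← Finset.prod_mul_distrib, ← Finset.prod_mul_distrib, ← Finset.prod_mul_distrib]
    apply Finset.prod_le_prod
    · intro j _
      positivity
    · intro j _
      have hj : (0:ℝ) ≤ (j:ℝ) := Nat.cast_nonneg j
      simp only [hm]
      nlinarith [mul_nonneg (mul_nonneg (sq_nonneg (a-b)) hc.le) ha.le,
        mul_nonneg (mul_nonneg (sq_nonneg (a-b)) hc.le) hb.le,
        mul_nonneg (mul_nonneg (sq_nonneg (a-b)) hc.le) hj,
        mul_nonneg (sq_nonneg (a-b)) (sq_nonneg c)]
  exact le_of_tendsto_of_tendsto'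
    (((GammaSeq_tendsto_Gamma (a+c)).mul (GammaSeq_tendsto_Gamma (b+c))).mul
      ((GammaSeq_tendsto_Gamma m).pow 2))
    ((((GammaSeq_tendsto_Gamma (m+c)).pow 2).mul (GammaSeq_tendsto_Gamma a)).mul
      (GammaSeq_tendsto_Gamma b)) hseq

/-- The constant `C(β) = 2^α Γ(d/2-αβ/2)Γ(α(β+1)/2)/(Γ(d/2-α(β+1)/2)Γ(αβ/2))` of the
fractional Hardy inequality is maximized over `β ∈ (0, d/α - 1)` at `β = (d-α)/(2α)`,
where it equals `2^α Γ((d+α)/4)²/Γ((d-α)/4)²`. -/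
theorem fractional_hardy_constant_maximal
    (d : ℕ) (hd : 1 ≤ d) (α : ℝ) (hα1 : 0 < α) (hα2 : α < min (d:ℝ) 2) :
    (∀ β : ℝ, 0 < β → β < (d:ℝ)/α - 1 →
      2 ^ α * Real.Gamma ((d:ℝ)/2 - α*β/2) * Real.Gamma (α*(β+1)/2)
          / (Real.Gamma ((d:ℝ)/2 - α*(β+1)/2) * Real.Gamma (α*β/2))
        ≤ 2 ^ α * Real.Gamma (((d:ℝ)+α)/4) ^ 2 / Real.Gamma (((d:ℝ)-α)/4) ^ 2) ∧
    (2 ^ α * Real.Gamma ((d:ℝ)/2 - α*(((d:ℝ)-α)/(2*α))/2)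
        * Real.Gamma (α*((((d:ℝ)-α)/(2*α))+1)/2)
        / (Real.Gamma ((d:ℝ)/2 - α*((((d:ℝ)-α)/(2*α))+1)/2)
            * Real.Gamma (α*(((d:ℝ)-α)/(2*α))/2))
      = 2 ^ α * Real.Gamma (((d:ℝ)+α)/4) ^ 2 / Real.Gamma (((d:ℝ)-α)/4) ^ 2) := by
  have hαd : α < (d:ℝ) := lt_of_lt_of_le hα2 (min_le_left _ _)
  constructor
  · intro β hβ1 hβ2
    rw [lt_sub_iff_add_lt, lt_div_iff₀ hα1] at hβ2
    -- (β + 1) * α < d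
    set a := α*β/2 with ha'
    set b := (d:ℝ)/2 - α*(β+1)/2 with hb'
    set c := α/2 with hc'
    have ha : 0 < a := by rw [ha']; positivity
    have hb : 0 < b := by rw [hb']; nlinarith
    have hc : 0 < c := by rw [hc']; positivity
    have key := gamma_prod_key a b c ha hb hc
    have e1 : (d:ℝ)/2 - α*β/2 = b + c := by rw [hb', hc']; ring
    have e2 : α*(β+1)/2 = a + c := by rw [ha', hc']; ring
    have e3 : ((d:ℝ)+α)/4 = (a+b)/2 + c := by rw [ha', hb', hc']; ring
    have e4 : ((d:ℝ)-α)/4 = (a+b)/2 := by rw [ha', hb']; ring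
    rw [e3, e1, e2, e4]
    have hGb : 0 < Real.Gamma b := Real.Gamma_pos_of_pos hb
    have hGa : 0 < Real.Gamma a := Real.Gamma_pos_of_pos ha
    have hGm : 0 < Real.Gamma ((a+b)/2) := Real.Gamma_pos_of_pos (by positivity)
    have h2α : (0:ℝ) < 2 ^ α := by positivity
    rw [div_le_div_iff₀ (by positivity) (by positivity)]
    nlinarith [mul_le_mul_of_nonneg_left key h2α.le]
  · have hα : α ≠ 0 := hα1.ne'
    have e1 : (d:ℝ)/2 - α*(((d:ℝ)-α)/(2*α))/2 = ((d:ℝ)+α)/4 := by field_simp; ring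
    have e2 : α*((((d:ℝ)-α)/(2*α))+1)/2 = ((d:ℝ)+α)/4 := by field_simp; ring
    have e3 : (d:ℝ)/2 - α*((((d:ℝ)-α)/(2*α))+1)/2 = ((d:ℝ)-α)/4 := by field_simp; ring
    have e4 : α*(((d:ℝ)-α)/(2*α))/2 = ((d:ℝ)-α)/4 := by field_simp; ring
    rw [e3, e1, e2, e4]
    ring
end

section
/- Let φ, V : [0,∞) → [0,∞) be nondecreasing, positive on (0,∞), with φ(0)=V(0)=0 and φ(r) → ∞. Assume V ∈ WLSC(A, C) (V(R)/V(r) ≥ C(R/r)^A for 0<r≤R) and φ ∈ WUSC(ᾱ, c̄) with A/ᾱ > 1. Fix 0 < β < A/ᾱ - 1 and r > 0. Then ∫_{φ(r)}^∞ t^β / V(φ⁻¹(t)) dt ≤ (c̄^{A/ᾱ} / (C (A/ᾱ - 1 - β))) · φ(r)^{β+1} / V(r), where φ⁻¹ is the generalized inverse of φ. -/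
/-!
For `t > φ(r)`, upper scaling of `φ` forces every `s` with `φ(s) > t` to satisfy
`s ≥ (t / (c̄ φ(r)))^{1/ᾱ} r` (and `s > r`), so the same holds for `φ⁻¹(t)`. Lower scaling of `V`
turns this into `V(φ⁻¹(t)) ≥ C (t / (c̄ φ(r)))^{A/ᾱ} V(r)`, so the integrand is at most a multiple
of `t^{β - A/ᾱ}`, whose tail integral is explicit because `β - A/ᾱ < -1`.
-/

open MeasureTheory ENNReal Set Filter

section Scaling

variable {φ V : ℝ → ℝ} {A C a c r t x y : ℝ}

lemma rpow_inv_le_div_of_upperScaling (ha : 0 < a) (hc : 0 < c)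
    (hφscale : ∀ l ≥ (1:ℝ), ∀ θ > (0:ℝ), φ (l * θ) ≤ c * l ^ a * φ θ)
    (hr : 0 < r) (hφr : 0 < φ r) (hrx : r ≤ x) (ht : 0 ≤ t) (htx : t ≤ φ x) :
    (t / (c * φ r)) ^ a⁻¹ ≤ x / r := by
  have hscale : φ x ≤ c * (x / r) ^ a * φ r := by
    simpa only [div_mul_cancel₀ x hr.ne'] using hφscale (x / r) ((one_le_div hr).2 hrx) r hr
  have hratio : t / (c * φ r) ≤ (x / r) ^ a := by
    rw [div_le_iff₀ (by positivity)]
    linarith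
  calc (t / (c * φ r)) ^ a⁻¹ ≤ ((x / r) ^ a) ^ a⁻¹ := by gcongr
    _ = x / r := Real.rpow_rpow_inv (div_nonneg (hr.le.trans hrx) hr.le) ha.ne'

lemma max_one_rpow_inv_mul_le_sInf (ha : 0 < a) (hc : 0 < c)
    (hφmono : MonotoneOn φ (Ici 0)) (hφtop : Tendsto φ atTop atTop)
    (hφscale : ∀ l ≥ (1:ℝ), ∀ θ > (0:ℝ), φ (l * θ) ≤ c * l ^ a * φ θ)
    (hr : 0 < r) (hφr : 0 < φ r) (ht : φ r < t) :
    max 1 ((t / (c * φ r)) ^ a⁻¹) * r ≤ sInf {s : ℝ | 0 < s ∧ t < φ s} := by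
  have hne : {s : ℝ | 0 < s ∧ t < φ s}.Nonempty :=
    ((eventually_gt_atTop 0).and (hφtop.eventually (eventually_gt_atTop t))).exists
  refine le_csInf hne fun x ⟨hx, htx⟩ => ?_
  have hrx : r < x := hφmono.reflect_lt hr.le hx.le (ht.trans htx)
  rw [← le_div_iff₀ hr]
  exact max_le ((one_le_div hr).2 hrx.le)
    (rpow_inv_le_div_of_upperScaling ha hc hφscale hr hφr hrx.le (hφr.trans ht).le htx.le)

lemma mul_rpow_mul_le_of_lowerScaling {q : ℝ} (hVmono : MonotoneOn V (Ici 0)) (hA : 0 ≤ A)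
    (hC : 0 ≤ C) (hVscale : ∀ l ≥ (1:ℝ), ∀ θ > (0:ℝ), C * l ^ A * V θ ≤ V (l * θ))
    (hq : 0 ≤ q) (hr : 0 < r) (hVr : 0 ≤ V r) (hy : max 1 q * r ≤ y) :
    C * q ^ A * V r ≤ V y := by
  have hl : 0 ≤ max 1 q * r := mul_nonneg (zero_le_one.trans (le_max_left 1 q)) hr.le
  calc C * q ^ A * V r ≤ C * max 1 q ^ A * V r := by gcongr; exact le_max_right 1 q
    _ ≤ V (max 1 q * r) := hVscale _ (le_max_left 1 q) r hr
    _ ≤ V y := hVmono hl (hl.trans hy) hy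

end Scaling

lemma rpow_div_le_mul_rpow_sub {t W K C Vr β p : ℝ} (ht : 0 < t) (hK : 0 < K) (hC : 0 < C)
    (hVr : 0 < Vr) (hW : C * (t / K) ^ p * Vr ≤ W) :
    t ^ β / W ≤ K ^ p / (C * Vr) * t ^ (β - p) := by
  have hden : 0 < C * (t / K) ^ p * Vr := by positivity
  calc t ^ β / W ≤ t ^ β / (C * (t / K) ^ p * Vr) := by gcongr
    _ = K ^ p / (C * Vr) * t ^ (β - p) := by
      rw [Real.div_rpow ht.le hK.le, Real.rpow_sub ht]
      field_simp

lemma setLIntegral_Ioi_le_of_le_mul_rpow {f : ℝ → ℝ} {M γ s : ℝ} (hs : 0 < s) (hγ : γ < -1)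
    (hM : 0 ≤ M) (hf : ∀ t ∈ Ioi s, f t ≤ M * t ^ γ) :
    ∫⁻ t in Ioi s, ENNReal.ofReal (f t) ≤ ENNReal.ofReal (M * (s ^ (γ + 1) / -(γ + 1))) := by
  calc ∫⁻ t in Ioi s, ENNReal.ofReal (f t)
      ≤ ∫⁻ t in Ioi s, ENNReal.ofReal (M * t ^ γ) :=
        setLIntegral_mono (by fun_prop) fun t ht => ENNReal.ofReal_le_ofReal (hf t ht)
    _ ≤ ENNReal.ofReal (∫ t in Ioi s, M * t ^ γ) :=
        (ofReal_integral_eq_lintegral_ofReal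
          ((integrableOn_Ioi_rpow_of_lt hγ hs).const_mul M)
          (ae_restrict_of_forall_mem measurableSet_Ioi fun t ht =>
            mul_nonneg hM (Real.rpow_nonneg (hs.trans ht).le γ))).symm.le
    _ = ENNReal.ofReal (M * (s ^ (γ + 1) / -(γ + 1))) := by
        rw [integral_const_mul, integral_Ioi_rpow_of_lt hγ hs, neg_div, div_neg]

theorem tail_integral_bound_general
    (φ V : ℝ → ℝ)
    (hφmono : MonotoneOn φ (Set.Ici 0)) (hVmono : MonotoneOn V (Set.Ici 0))
    (hφpos : ∀ x > (0:ℝ), 0 < φ x) (hVpos : ∀ x > (0:ℝ), 0 < V x)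
    (hφtop : Filter.Tendsto φ Filter.atTop Filter.atTop)
    (A C : ℝ) (hA : 0 < A) (hC0 : 0 < C)
    (hVscale : ∀ l ≥ (1:ℝ), ∀ θ > (0:ℝ), C * l ^ A * V θ ≤ V (l * θ))
    (a c : ℝ) (ha : 0 < a) (hc : 1 ≤ c)
    (hφscale : ∀ l ≥ (1:ℝ), ∀ θ > (0:ℝ), φ (l * θ) ≤ c * l ^ a * φ θ)
    (β : ℝ) (hβ : β < A / a - 1)
    (r : ℝ) (hr : 0 < r)
    (φinv : ℝ → ℝ) (hφinv : ∀ u, φinv u = sInf {s : ℝ | 0 < s ∧ u < φ s}) :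
    (∫⁻ t in Set.Ioi (φ r), ENNReal.ofReal (t ^ β / V (φinv t)))
      ≤ ENNReal.ofReal (c ^ (A/a) / (C * (A/a - 1 - β)) * (φ r ^ (β+1) / V r)) := by
  have hc0 : 0 < c := one_pos.trans_le hc
  have hφr := hφpos r hr
  have hVr := hVpos r hr
  have hV_φinv : ∀ t ∈ Ioi (φ r), C * (t / (c * φ r)) ^ (A / a) * V r ≤ V (φinv t) := by
    intro t ht
    have hq : 0 ≤ t / (c * φ r) := div_nonneg (hφr.trans ht).le (by positivity)
    rw [show A / a = a⁻¹ * A by ring, Real.rpow_mul hq, hφinv]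
    exact mul_rpow_mul_le_of_lowerScaling hVmono hA.le hC0.le hVscale (by positivity) hr hVr.le
      (max_one_rpow_inv_mul_le_sInf ha hc0 hφmono hφtop hφscale hr hφr ht)
  have hintegrand : ∀ t ∈ Ioi (φ r),
      t ^ β / V (φinv t) ≤ (c * φ r) ^ (A / a) / (C * V r) * t ^ (β - A / a) := fun t ht =>
    rpow_div_le_mul_rpow_sub (hφr.trans ht) (by positivity) hC0 hVr (hV_φinv t ht)
  refine (setLIntegral_Ioi_le_of_le_mul_rpow hφr (by linarith) (by positivity)
    hintegrand).trans_eq (congrArg ENNReal.ofReal ?_)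
  have hgap : A / a - 1 - β ≠ 0 := by linarith
  generalize A / a = p at hgap ⊢
  rw [Real.mul_rpow hc0.le hφr.le, show -(β - p + 1) = p - 1 - β by ring]
  field_simp
  rw [← Real.rpow_add hφr]
  ring_nf

/-- Under weak lower scaling `WLSC(A,C)` for the volume function `V` and weak upper scaling
`WUSC(ᾱ,c̄)` for `φ` with `A/ᾱ > 1`, for `0 < β < A/ᾱ - 1` and `r > 0`:
`∫_{φ(r)}^∞ t^β / V(φ⁻¹(t)) dt ≤ (c̄^{A/ᾱ}/(C(A/ᾱ-1-β))) φ(r)^{β+1}/V(r)`. -/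
theorem tail_integral_bound
    (φ V : ℝ → ℝ)
    (hφmono : MonotoneOn φ (Set.Ici 0)) (hVmono : MonotoneOn V (Set.Ici 0))
    (hφ0 : φ 0 = 0) (hV0 : V 0 = 0)
    (hφpos : ∀ x > (0:ℝ), 0 < φ x) (hVpos : ∀ x > (0:ℝ), 0 < V x)
    (hφtop : Filter.Tendsto φ Filter.atTop Filter.atTop)
    (A C : ℝ) (hA : 0 < A) (hC0 : 0 < C) (hC1 : C ≤ 1)
    (hVscale : ∀ l ≥ (1:ℝ), ∀ θ > (0:ℝ), C * l ^ A * V θ ≤ V (l * θ))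
    (a c : ℝ) (ha : 0 < a) (hc : 1 ≤ c)
    (hφscale : ∀ l ≥ (1:ℝ), ∀ θ > (0:ℝ), φ (l * θ) ≤ c * l ^ a * φ θ)
    (hAa : 1 < A / a)
    (β : ℝ) (hβ0 : 0 < β) (hβ : β < A / a - 1)
    (r : ℝ) (hr : 0 < r)
    (φinv : ℝ → ℝ) (hφinv : ∀ u, φinv u = sInf {s : ℝ | 0 < s ∧ u < φ s}) :
    (∫⁻ t in Set.Ioi (φ r), ENNReal.ofReal (t ^ β / V (φinv t)))
      ≤ ENNReal.ofReal (c ^ (A/a) / (C * (A/a - 1 - β)) * (φ r ^ (β+1) / V r)) :=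
  tail_integral_bound_general φ V hφmono hVmono hφpos hVpos hφtop A C hA hC0 hVscale a c ha hc
    hφscale β hβ r hr φinv hφinv
end
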